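/- Let q_l = 1/(1 + e^{2^{l-η}}) for real η and integer l, and let H(p) = -p log₂ p - (1-p) log₂(1-p) be the binary entropy. Then for l > η, H(q_l) < 3 log₂(e) · 2^{η - l}. -/

import Mathlib

noncomputable def binH (p : ℝ) : ℝ :=
  -(p * Real.logb 2 p) - (1 - p) * Real.logb 2 (1 - p)

open Real

/-! With `E = eˣ` and `q = 1/(1+E)`, the entropy in nats is `log (1 + e⁻ˣ) + x/(1+E)`, which is
less than `(1 + x) e⁻ˣ`; the quadratic lower bound for `eˣ` turns this into `3/x`. Dividing by
`log 2` and taking `x = 2^(l-η)` gives the bound in bits. -/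

lemma binH_eq_binEntropy_div_log_two (p : ℝ) : binH p = binEntropy p / log 2 := by
  simp only [binH, binEntropy, logb, log_inv]
  ring

lemma binEntropy_inv_one_add_exp (x : ℝ) :
    binEntropy (1 + exp x)⁻¹ = log (1 + exp (-x)) + x / (1 + exp x) := by
  have hE : 0 < exp x := exp_pos x
  have hlog : log (1 + exp x) = x + log (1 + exp (-x)) := by
    rw [← log_exp x, ← log_mul hE.ne' (by positivity), log_exp, exp_neg, mul_add,
      mul_inv_cancel₀ hE.ne', mul_one, add_comm]
  have hcompl : (1 - (1 + exp x)⁻¹)⁻¹ = 1 + exp (-x) := by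
    rw [exp_neg]
    field_simp
    ring
  rw [binEntropy, inv_inv, hcompl, hlog]
  field_simp
  ring

lemma binEntropy_inv_one_add_exp_lt {x : ℝ} (hx : 0 < x) : binEntropy (1 + exp x)⁻¹ < 3 / x := by
  have hE : 0 < exp x := exp_pos x
  have hlog : log (1 + exp (-x)) ≤ exp (-x) := by
    linarith [log_le_sub_one_of_pos (show 0 < 1 + exp (-x) by positivity)]
  have hquad : x * (1 + x) ≤ 3 * exp x := by
    nlinarith [quadratic_le_exp_of_nonneg hx.le]
  calc binEntropy (1 + exp x)⁻¹ = log (1 + exp (-x)) + x / (1 + exp x) :=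
        binEntropy_inv_one_add_exp x
    _ < exp (-x) + x / exp x := add_lt_add_of_le_of_lt hlog (by gcongr; linarith)
    _ = (1 + x) / exp x := by rw [exp_neg]; ring
    _ ≤ 3 / x := by rw [div_le_div_iff₀ hE hx]; linarith

theorem stmt_6 (η : ℝ) (l : ℤ) :
    binH (1 / (1 + Real.exp ((2 : ℝ) ^ ((l : ℝ) - η)))) <
      3 * Real.logb 2 (Real.exp 1) * (2 : ℝ) ^ (η - (l : ℝ)) := by
  set x := (2 : ℝ) ^ ((l : ℝ) - η)
  have hx : 0 < x := rpow_pos_of_pos two_pos _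
  have hinv : (2 : ℝ) ^ (η - (l : ℝ)) = x⁻¹ := by
    rw [← rpow_neg zero_le_two, neg_sub]
  have hrhs : 3 * logb 2 (exp 1) * (2 : ℝ) ^ (η - (l : ℝ)) = 3 / x / log 2 := by
    rw [hinv, logb, log_exp]
    ring
  rw [hrhs, binH_eq_binEntropy_div_log_two, one_div]
  exact div_lt_div_of_pos_right (binEntropy_inv_one_add_exp_lt hx) (log_pos one_lt_two)
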